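/- Let w be a non-trivial rule word, (C,p,d) an initial configuration, and let V ⊆ ℤ² be the set of cells visited at infinitely many times t by the orbit (C_t,p_t,d_t) = T_w^t(C,p,d). Then V contains no corner: there is no cell v ∈ V such that exactly two of the four cells v+(1,0), v+(−1,0), v+(0,1), v+(0,−1) belong to V and these two neighbours lie in mutually perpendicular directions from v. -/

import Mathlib

/-- Cells of the grid `ℤ²`. -/
abbrev Cell : Type := ℤ × ℤ

/-- The two letters of a rule word. -/
inductive Letter : Type
  | L | R
deriving DecidableEq

/-- The four unit directions of `ℤ²` (the state set `Q`). -/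
inductive Dir : Type
  | E | N | W | S
deriving DecidableEq

/-- Rotation by 90° counterclockwise. -/
def Dir.left : Dir → Dir
  | .E => .N | .N => .W | .W => .S | .S => .E

/-- Rotation by 90° clockwise. -/
def Dir.right : Dir → Dir
  | .E => .S | .S => .W | .W => .N | .N => .E

/-- The unit vector of a direction. -/
def Dir.vec : Dir → Cell
  | .E => (1, 0) | .N => (0, 1) | .W => (-1, 0) | .S => (0, -1)

/-- Configurations: a picture `ℤ² → ℤ/nℤ`, a position and a direction. -/
abbrev Config (n : ℕ) : Type := (Cell → ZMod n) × Cell × Dir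

/-- One step of the generalised ant with rule word `w ∈ {L,R}⁺`:
the symbol under the ant is increased by `1 (mod |w|)`, the ant turns left or
right according to the letter `w_{C(p)}`, and moves one step in its new direction. -/
def antStepW (w : List Letter) (cfg : Config w.length) : Config w.length :=
  let C := cfg.1
  let p := cfg.2.1
  let d' := if w.getD (C p).val Letter.L = Letter.L then cfg.2.2.left else cfg.2.2.right
  (Function.update C p (C p + 1), p + d'.vec, d')

/-- The set of cells visited at infinitely many times by the orbit of `cfg`. -/
def visitedInfinitely (w : List Letter) (cfg : Config w.length) : Set Cell :=
  {v : Cell | {t : ℕ | ((antStepW w)^[t] cfg).2.1 = v}.Infinite}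

/-!
Every step switches the ant between horizontal and vertical motion and moves it to a cell of the
other chessboard colour, so the ant always enters a given cell along the same axis. Suppose `v` is
visited infinitely often while its neighbours `v - d₁`, `v - d₂` in two perpendicular directions
are not. Late visits then enter `v` from the remaining neighbour on that axis and leave towards the
remaining one on the other axis, so the ant turns the same way at all of them. But each visit
increments the symbol at `v`, so late visits read every letter of `w`, both `L` and `R`.
-/

namespace Dir

def turn : Letter → Dir → Dir
  | .L => left
  | .R => right

def axis : Dir → ZMod 2
  | .E | .W => 0
  | .N | .S => 1

lemma axis_turn (ℓ : Letter) (d : Dir) : (d.turn ℓ).axis = d.axis + 1 := by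
  cases ℓ <;> cases d <;> decide

lemma parity_add_vec (p : Cell) (d : Dir) :
    (((p + d.vec).1 + (p + d.vec).2 : ℤ) : ZMod 2) = ((p.1 + p.2 : ℤ) : ZMod 2) + 1 := by
  cases d <;> simp only [vec, Prod.fst_add, Prod.snd_add] <;> push_cast <;> grind

lemma exists_vec_eq {d : Cell} (h : d = (1, 0) ∨ d = (-1, 0) ∨ d = (0, 1) ∨ d = (0, -1)) :
    ∃ e : Dir, e.vec = d := by
  rcases h with rfl | rfl | rfl | rfl
  exacts [⟨E, rfl⟩, ⟨W, rfl⟩, ⟨N, rfl⟩, ⟨S, rfl⟩]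

lemma eq_left_or_eq_left_of_vec_ne (d₁ d₂ : Dir) (h : d₁.vec ≠ d₂.vec) (h' : d₁.vec ≠ -d₂.vec) :
    d₂ = d₁.left ∨ d₁ = d₂.left := by
  cases d₁ <;> cases d₂ <;> simp_all [vec, left]

/-- The ant enters a cell `v` moving in direction `d`, i.e. from `v - d.vec`, and leaves it for
`v + d'.vec`; neither of these cells is `v - e.vec` or `v - e.left.vec`. -/
def PassAvoids (e d d' : Dir) : Prop :=
  d.vec ≠ e.vec ∧ d.vec ≠ e.left.vec ∧ d'.vec ≠ -e.vec ∧ d'.vec ≠ -e.left.vec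

lemma axis_ne_of_passAvoids {e d d' : Dir} (h : PassAvoids e d (d.turn .L))
    (h' : PassAvoids e d' (d'.turn .R)) : d.axis ≠ d'.axis := by
  unfold PassAvoids at h h'
  revert h h'
  cases e <;> cases d <;> cases d' <;> decide

end Dir

namespace Ant

variable (w : List Letter) (cfg : Config w.length)

def pic (t : ℕ) : Cell → ZMod w.length := ((antStepW w)^[t] cfg).1

def pos (t : ℕ) : Cell := ((antStepW w)^[t] cfg).2.1

def dir (t : ℕ) : Dir := ((antStepW w)^[t] cfg).2.2

lemma pic_succ (t : ℕ) :
    pic w cfg (t + 1) =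
      Function.update (pic w cfg t) (pos w cfg t) (pic w cfg t (pos w cfg t) + 1) := by
  simp only [pic, pos, Function.iterate_succ_apply', antStepW]

lemma dir_succ (t : ℕ) :
    dir w cfg (t + 1) = (dir w cfg t).turn (w.getD (pic w cfg t (pos w cfg t)).val .L) := by
  simp only [dir, pic, pos, Function.iterate_succ_apply', antStepW]
  split_ifs with h
  · rw [h]; rfl
  · cases h' : w.getD _ _
    · exact absurd h' h
    · rfl

lemma pos_succ (t : ℕ) : pos w cfg (t + 1) = pos w cfg t + (dir w cfg (t + 1)).vec := by
  simp only [dir, pos, Function.iterate_succ_apply', antStepW]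

lemma axis_dir_sub_parity_pos (t : ℕ) :
    (dir w cfg t).axis - ((pos w cfg t).1 + (pos w cfg t).2 : ℤ) =
      (dir w cfg 0).axis - ((pos w cfg 0).1 + (pos w cfg 0).2 : ℤ) := by
  induction t with
  | zero => rfl
  | succ t ih => rw [← ih, pos_succ, Dir.parity_add_vec, dir_succ, Dir.axis_turn]; ring

lemma axis_dir_eq_of_pos_eq {s t : ℕ} (h : pos w cfg s = pos w cfg t) :
    (dir w cfg s).axis = (dir w cfg t).axis := by
  have hs := axis_dir_sub_parity_pos w cfg s
  rw [h, ← axis_dir_sub_parity_pos w cfg t] at hs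
  exact sub_left_injective hs

lemma pic_apply (t : ℕ) (v : Cell) :
    pic w cfg t v = cfg.1 v + Nat.count (pos w cfg · = v) t := by
  induction t with
  | zero => simp only [pic, Function.iterate_zero, id_eq, Nat.count_zero, Nat.cast_zero, add_zero]
  | succ t ih =>
    rw [pic_succ, Nat.count_succ]
    by_cases h : pos w cfg t = v
    · rw [h, Function.update_self, ih, if_pos rfl]
      push_cast
      ring
    · rw [Function.update_of_ne (Ne.symm h), ih, if_neg h, add_zero]

lemma mem_visitedInfinitely_iff (v : Cell) :
    v ∈ visitedInfinitely w cfg ↔ {t | pos w cfg t = v}.Infinite := Iff.rfl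

lemma exists_forall_ge_pos_ne {u : Cell} (hu : u ∉ visitedInfinitely w cfg) :
    ∃ T, ∀ t ≥ T, pos w cfg t ≠ u := by
  rw [mem_visitedInfinitely_iff, ← Nat.frequently_atTop_iff_infinite, Filter.not_frequently,
    Filter.eventually_atTop] at hu
  exact hu

lemma exists_ge_pos_eq_pic_eq {v : Cell} (hv : v ∈ visitedInfinitely w cfg) [NeZero w.length]
    (T : ℕ) (a : ZMod w.length) :
    ∃ t ≥ T, pos w cfg t = v ∧ pic w cfg t v = a := by
  rw [mem_visitedInfinitely_iff] at hv
  set k := (a - cfg.1 v).val + w.length * T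
  refine ⟨Nat.nth (pos w cfg · = v) k, ?_, Nat.nth_mem_of_infinite hv k, ?_⟩
  · calc T ≤ k := Nat.le_add_left_of_le (Nat.le_mul_of_pos_left T (NeZero.pos _))
      _ ≤ _ := (Nat.nth_strictMono hv).id_le k
  · rw [pic_apply, Nat.count_nth_of_infinite hv]
    simp [k]

lemma exists_ge_pos_eq_dir_succ_eq_turn {v : Cell} (hv : v ∈ visitedInfinitely w cfg)
    {ℓ : Letter} (hℓ : ℓ ∈ w) (T : ℕ) :
    ∃ t ≥ T, pos w cfg t = v ∧ dir w cfg (t + 1) = (dir w cfg t).turn ℓ := by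
  obtain ⟨i, hi, rfl⟩ := List.mem_iff_getElem.mp hℓ
  have : NeZero w.length := ⟨(Nat.zero_lt_of_lt hi).ne'⟩
  obtain ⟨t, hT, hv, hpic⟩ := exists_ge_pos_eq_pic_eq w cfg hv T i
  refine ⟨t, hT, hv, ?_⟩
  rw [dir_succ, hv, hpic, ZMod.val_cast_of_lt hi, List.getD_eq_getElem]

lemma sub_vec_mem_or_sub_left_vec_mem (hL : Letter.L ∈ w) (hR : Letter.R ∈ w) (e : Dir)
    {v : Cell} (hv : v ∈ visitedInfinitely w cfg) :
    v - e.vec ∈ visitedInfinitely w cfg ∨ v - e.left.vec ∈ visitedInfinitely w cfg := by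
  by_contra! h
  obtain ⟨T₁, h₁⟩ := exists_forall_ge_pos_ne w cfg h.1
  obtain ⟨T₂, h₂⟩ := exists_forall_ge_pos_ne w cfg h.2
  have passAvoids : ∀ t > max T₁ T₂, pos w cfg t = v →
      Dir.PassAvoids e (dir w cfg t) (dir w cfg (t + 1)) := by
    rintro t ht rfl
    obtain ⟨s, rfl⟩ : ∃ s, t = s + 1 := ⟨t - 1, by omega⟩
    have hin : pos w cfg s = pos w cfg (s + 1) - (dir w cfg (s + 1)).vec := by
      rw [pos_succ, add_sub_cancel_right]
    have hout : pos w cfg (s + 2) = pos w cfg (s + 1) - -(dir w cfg (s + 2)).vec := by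
      rw [pos_succ, sub_neg_eq_add]
    refine ⟨?_, ?_, ?_, ?_⟩ <;> intro heq
    · exact h₁ s (by omega) (by rw [hin, heq])
    · exact h₂ s (by omega) (by rw [hin, heq])
    · exact h₁ (s + 2) (by omega) (by rw [hout, heq, neg_neg])
    · exact h₂ (s + 2) (by omega) (by rw [hout, heq, neg_neg])
  obtain ⟨t₁, ht₁, hv₁, hturn₁⟩ := exists_ge_pos_eq_dir_succ_eq_turn w cfg hv hL (max T₁ T₂ + 1)
  obtain ⟨t₂, ht₂, hv₂, hturn₂⟩ := exists_ge_pos_eq_dir_succ_eq_turn w cfg hv hR (max T₁ T₂ + 1)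
  have avoid₁ := passAvoids t₁ ht₁ hv₁
  have avoid₂ := passAvoids t₂ ht₂ hv₂
  rw [hturn₁] at avoid₁
  rw [hturn₂] at avoid₂
  exact Dir.axis_ne_of_passAvoids avoid₁ avoid₂ (axis_dir_eq_of_pos_eq w cfg (hv₁.trans hv₂.symm))

end Ant

/-- For a non-trivial rule word, the set `V` of cells visited
infinitely often contains no corner: no cell `v ∈ V` has exactly two of its four
orthogonal neighbours in `V` with these two neighbours in mutually perpendicular
directions from `v`. -/
theorem ant_infinitely_visited_no_corner (w : List Letter)
    (hL : Letter.L ∈ w) (hR : Letter.R ∈ w) (cfg : Config w.length) :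
    ¬ ∃ v : Cell, v ∈ visitedInfinitely w cfg ∧
      ∃ d₁ d₂ : Cell,
        (d₁ = (1, 0) ∨ d₁ = (-1, 0) ∨ d₁ = (0, 1) ∨ d₁ = (0, -1)) ∧
        (d₂ = (1, 0) ∨ d₂ = (-1, 0) ∨ d₂ = (0, 1) ∨ d₂ = (0, -1)) ∧
        d₁ ≠ d₂ ∧ d₁ ≠ -d₂ ∧
        v + d₁ ∈ visitedInfinitely w cfg ∧ v + d₂ ∈ visitedInfinitely w cfg ∧
        v - d₁ ∉ visitedInfinitely w cfg ∧ v - d₂ ∉ visitedInfinitely w cfg := by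
  rintro ⟨v, hv, d₁, d₂, h₁, h₂, hne, hperp, -, -, hn₁, hn₂⟩
  obtain ⟨e₁, rfl⟩ := Dir.exists_vec_eq h₁
  obtain ⟨e₂, rfl⟩ := Dir.exists_vec_eq h₂
  rcases Dir.eq_left_or_eq_left_of_vec_ne e₁ e₂ hne hperp with rfl | rfl
  · exact (Ant.sub_vec_mem_or_sub_left_vec_mem w cfg hL hR e₁ hv).elim hn₁ hn₂
  · exact (Ant.sub_vec_mem_or_sub_left_vec_mem w cfg hL hR e₂ hv).elim hn₂ hn₁
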